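/- arXiv:2305.12337 — 2 statements merged into one kernel-verified Lean document; each statement's English description precedes it below -/
import Mathlib

section
/- Let A be a subring of a commutative ring B, and let J := {a ∈ A : a·b ∈ A for all b ∈ B} be the conductor of A in B (an ideal of both A and B). Assume that J is a radical ideal of B, i.e., J equals its own radical in B. Let I be an ideal of B such that I ⊆ J and such that I, viewed as an ideal of A, is a radical ideal of A. Then I is a radical ideal of B, i.e., for every b ∈ B, if b^n ∈ I for some positive integer n, then b ∈ I. -/
/-- The conductor of a subring `A` of a commutative ring `B`:
`J = {a ∈ A : a·b ∈ A for all b ∈ B}`, realized as the ideal `{b : B | ∀ x, b * x ∈ A}`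
of `B` (note every such `b` satisfies `b = b * 1 ∈ A`). -/
def conductorIdeal {B : Type*} [CommRing B] (A : Subring B) : Ideal B where
  carrier := {b : B | ∀ x : B, b * x ∈ A}
  zero_mem' := fun x => by simpa using A.zero_mem
  add_mem' := fun {a b} ha hb x => by
    simpa [add_mul] using A.add_mem (ha x) (hb x)
  smul_mem' := fun c b hb => by
    intro x
    rw [smul_eq_mul, show c * b * x = b * (c * x) by ring]
    exact hb (c * x)

theorem mem_of_mem_conductorIdeal {B : Type*} [CommRing B] {A : Subring B} {b : B}
    (hb : b ∈ conductorIdeal A) : b ∈ A :=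
  mul_one b ▸ hb 1

/-- Let `A` be a subring of a commutative ring `B` and `J` the conductor of `A` in `B`.
Assume `J` is a radical ideal of `B`.  Let `I` be an ideal of `B` with `I ⊆ J` such that
`I`, viewed as an ideal of `A`, is a radical ideal of `A`.  Then `I` is a radical ideal
of `B`: for every `b ∈ B`, if `b ^ n ∈ I` for some positive integer `n`, then `b ∈ I`. -/
theorem radical_of_radical_in_subring {B : Type*} [CommRing B] (A : Subring B)
    (hJrad : ∀ (b : B) (n : ℕ), 0 < n → b ^ n ∈ conductorIdeal A → b ∈ conductorIdeal A)
    (I : Ideal B) (hIJ : I ≤ conductorIdeal A)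
    (hIArad : ∀ (a : A) (n : ℕ), 0 < n → a ^ n ∈ I.comap A.subtype →
      a ∈ I.comap A.subtype) :
    ∀ (b : B) (n : ℕ), 0 < n → b ^ n ∈ I → b ∈ I := by
  intro b n hn hbn
  have hbA : b ∈ A := mem_of_mem_conductorIdeal (hJrad b n hn (hIJ hbn))
  exact hIArad ⟨b, hbA⟩ n hn hbn
end

section
/- Let A be a subring of a commutative ring B, and let J := {a ∈ A : a·b ∈ A for all b ∈ B} be the conductor of A in B. Assume that J is a radical ideal of B. Let I be a radical ideal of A with I ⊆ J. Then the ideal of B generated by I equals I itself: I·B = I. In particular, I is an ideal of B, and I is a radical ideal of B. -/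
namespace Subring

variable {B : Type*} [CommRing B] {A : Subring B}

theorem mem_of_mem_conductorIdeal {b : B} (hb : b ∈ conductorIdeal A) : b ∈ A := by
  simpa using hb 1

variable {I : Ideal A}

theorem exists_mem_ideal_coe_eq_mul (hI : I.IsRadical) {a : A} (ha : a ∈ I)
    (haJ : (a : B) ∈ conductorIdeal A) (b : B) : ∃ c ∈ I, (c : B) = b * a := by
  let c : A := ⟨b * a, mul_comm (a : B) b ▸ haJ b⟩
  let d : A := ⟨a * (b * b), haJ (b * b)⟩
  have hc_sq : c ^ 2 = a * d := Subtype.ext <| by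
    simp only [c, d, SubmonoidClass.coe_pow, MulMemClass.coe_mul]
    ring
  exact ⟨c, hI ⟨2, hc_sq ▸ I.mul_mem_right d ha⟩, rfl⟩

theorem coe_map_subtype_eq_image (hI : I.IsRadical)
    (hIJ : ∀ a ∈ I, (a : B) ∈ conductorIdeal A) :
    ((I.map A.subtype : Ideal B) : Set B) = Subtype.val '' (I : Set A) := by
  refine Set.Subset.antisymm (fun x hx => ?_)
    (Set.image_subset_iff.2 fun a ha => Ideal.mem_map_of_mem A.subtype ha)
  induction hx using Submodule.span_induction with
  | mem x hx => exact hx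
  | zero => exact ⟨0, I.zero_mem, rfl⟩
  | add x y _ _ hx hy =>
    obtain ⟨a, ha, rfl⟩ := hx
    obtain ⟨a', ha', rfl⟩ := hy
    exact ⟨a + a', I.add_mem ha ha', rfl⟩
  | smul b x _ hx =>
    obtain ⟨a, ha, rfl⟩ := hx
    exact exists_mem_ideal_coe_eq_mul hI ha (hIJ a ha) b

theorem isRadical_map_subtype (hJ : (conductorIdeal A).IsRadical) (hI : I.IsRadical)
    (hIJ : ∀ a ∈ I, (a : B) ∈ conductorIdeal A) : (I.map A.subtype).IsRadical := by
  rintro b ⟨n, hbn⟩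
  have himage := coe_map_subtype_eq_image hI hIJ
  obtain ⟨c, hc, hcb⟩ : b ^ n ∈ Subtype.val '' (I : Set A) := himage ▸ hbn
  have hbA : b ∈ A := mem_of_mem_conductorIdeal (hJ ⟨n, hcb ▸ hIJ c hc⟩)
  have hbc : (⟨b, hbA⟩ : A) ^ n = c := Subtype.ext hcb.symm
  have hb : (⟨b, hbA⟩ : A) ∈ I := hI ⟨n, hbc ▸ hc⟩
  exact Ideal.mem_map_of_mem A.subtype hb

end Subring

/-- Let `A` be a subring of a commutative ring `B` and `J` the conductor of `A` in `B`.
Assume `J` is a radical ideal of `B`.  Let `I` be a radical ideal of `A` with `I ⊆ J`.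
Then the ideal of `B` generated by `I` equals `I` itself (`I·B = I` as subsets of `B`),
and `I` is a radical ideal of `B`. -/
theorem extension_eq_self_and_radical {B : Type*} [CommRing B] (A : Subring B)
    (hJrad : ∀ (b : B) (n : ℕ), 0 < n → b ^ n ∈ conductorIdeal A → b ∈ conductorIdeal A)
    (I : Ideal A)
    (hIrad : ∀ (a : A) (n : ℕ), 0 < n → a ^ n ∈ I → a ∈ I)
    (hIJ : ∀ a ∈ I, (a : B) ∈ conductorIdeal A) :
    ((Ideal.map A.subtype I : Ideal B) : Set B) = Subtype.val '' (I : Set A) ∧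
    (∀ (b : B) (n : ℕ), 0 < n → b ^ n ∈ Ideal.map A.subtype I →
      b ∈ Ideal.map A.subtype I) := by
  have hJ : (conductorIdeal A).IsRadical :=
    (Ideal.isRadical_iff_pow_one_lt 2 one_lt_two).2 fun b => hJrad b 2 two_pos
  have hI : I.IsRadical :=
    (Ideal.isRadical_iff_pow_one_lt 2 one_lt_two).2 fun a => hIrad a 2 two_pos
  exact ⟨Subring.coe_map_subtype_eq_image hI hIJ,
    fun b n _ hbn => Subring.isRadical_map_subtype hJ hI hIJ ⟨n, hbn⟩⟩
end
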